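/- arXiv:2210.13062 — 4 statements merged into one kernel-verified Lean document; each statement's English description precedes it below -/
import Mathlib

section
/- An MSC M = (E, →, ◁, λ) is an n-1 (mailbox) MSC if and only if the relation ≺_mb := (→ ∪ ◁ ∪ ↦_mb)⁺ is irreflexive (equivalently, the relation → ∪ ◁ ∪ ↦_mb is acyclic). -/
namespace MSCPaper

/-- A communication action: either `send p q m` (process `p` sends message `m`
to process `q`) or `recv p q m` (process `q` receives message `m` from `p`). -/
inductive Action (P Msg : Type) : Type where
  | send (p q : P) (m : Msg) : Action P Msg
  | recv (p q : P) (m : Msg) : Action P Msg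

namespace Action

variable {P Msg : Type}

/-- The process executing an action: the sender of a send, the receiver of a receive. -/
def exec : Action P Msg → P
  | send p _ _ => p
  | recv _ q _ => q

def isSend (a : Action P Msg) : Prop := ∃ p q m, a = send p q m

def isRecv (a : Action P Msg) : Prop := ∃ p q m, a = recv p q m

/-- `a` is a send action whose destination is `q`. -/
def sendTo (a : Action P Msg) (q : P) : Prop := ∃ p m, a = send p q m

/-- `a` is a send action from `p` to `q`. -/
def isSendFromTo (a : Action P Msg) (p q : P) : Prop := ∃ m, a = send p q m

/-- `a` is a receive action of a message from `p` to `q`. -/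
def isRecvFromTo (a : Action P Msg) (p q : P) : Prop := ∃ m, a = recv p q m

end Action

/-- The data of a message sequence chart: a set of events `E`, the process
successor relation `next` (→), the message relation `msg` (◁), and the
labelling `lbl` (λ). -/
structure PreMSC (P Msg : Type) where
  E : Type
  next : E → E → Prop
  msg : E → E → Prop
  lbl : E → Action P Msg

namespace PreMSC

variable {P Msg : Type}

/-- One step of the happens-before relation: `→ ∪ ◁`. -/
def step (M : PreMSC P Msg) (a b : M.E) : Prop := M.next a b ∨ M.msg a b

/-- The happens-before relation `≤ := (→ ∪ ◁)*`. -/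
def hb (M : PreMSC P Msg) : M.E → M.E → Prop := Relation.ReflTransGen M.step

/-- The strict happens-before relation `< := (→ ∪ ◁)⁺`. -/
def shb (M : PreMSC P Msg) : M.E → M.E → Prop := Relation.TransGen M.step

/-- An event is matched if it has a `◁`-successor. -/
def Matched (M : PreMSC P Msg) (e : M.E) : Prop := ∃ f, M.msg e f

/-- The axioms making a `PreMSC` an MSC. -/
structure IsMSC (M : PreMSC P Msg) : Prop where
  /-- The set of events is finite. -/
  finite : Finite M.E
  /-- `next` only relates events executed by the same process. -/
  next_exec : ∀ e f, M.next e f → (M.lbl e).exec = (M.lbl f).exec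
  /-- Events executed by the same process are totally ordered by `next⁺`. -/
  proc_total : ∀ e f, (M.lbl e).exec = (M.lbl f).exec → e ≠ f →
    Relation.TransGen M.next e f ∨ Relation.TransGen M.next f e
  /-- `next` is the immediate successor relation of the total order `next⁺`
  on each process line. -/
  next_cover : ∀ e f, M.next e f →
    ¬ ∃ g, Relation.TransGen M.next e g ∧ Relation.TransGen M.next g f
  /-- `◁` relates matching send/receive events. -/
  msg_lbl : ∀ e f, M.msg e f → ∃ p q m, M.lbl e = .send p q m ∧ M.lbl f = .recv p q m
  /-- Every receive event has exactly one `◁`-predecessor. -/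
  recv_matched : ∀ f, (M.lbl f).isRecv → ∃! e, M.msg e f
  /-- Every event has at most one `◁`-successor. -/
  msg_functional : ∀ e f f', M.msg e f → M.msg e f' → f = f'
  /-- The happens-before relation `(→ ∪ ◁)*` is a partial order, i.e. the
  relation `→ ∪ ◁` is acyclic. -/
  hb_po : ∀ e, ¬ Relation.TransGen M.step e e

/-- `lin` is a linearization of `M`: a reflexive total order containing
happens-before. -/
structure IsLin (M : PreMSC P Msg) (lin : M.E → M.E → Prop) : Prop where
  refl : ∀ e, lin e e
  trans : ∀ e f g, lin e f → lin f g → lin e g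
  antisymm : ∀ e f, lin e f → lin f e → e = f
  total : ∀ e f, lin e f ∨ lin f e
  hb_le : ∀ e f, M.hb e f → lin e f

/-- `lin` satisfies the mailbox (n-1) condition: any two sends to the same
destination in `lin`-order are either both matched with receives in the same
order, or the later one is unmatched. -/
def MailboxCond (M : PreMSC P Msg) (lin : M.E → M.E → Prop) : Prop :=
  ∀ s s' q, (M.lbl s).sendTo q → (M.lbl s').sendTo q → lin s s' →
    (∃ r r', M.msg s r ∧ M.msg s' r' ∧ lin r r') ∨ ¬ M.Matched s'

/-- `lin` satisfies the 1-n condition: any two sends executed by the same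
process, in process order, are either both matched with receives in the same
`lin`-order, or the later one is unmatched. -/
def OneNCond (M : PreMSC P Msg) (lin : M.E → M.E → Prop) : Prop :=
  ∀ s s', (M.lbl s).isSend → (M.lbl s').isSend →
    (M.lbl s).exec = (M.lbl s').exec → Relation.TransGen M.next s s' →
    (∃ r r', M.msg s r ∧ M.msg s' r' ∧ lin r r') ∨ ¬ M.Matched s'

/-- `lin` satisfies the n-n condition: any two sends in `lin`-order are either
both matched with receives in the same `lin`-order, or the later one is
unmatched. -/
def NNCond (M : PreMSC P Msg) (lin : M.E → M.E → Prop) : Prop :=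
  ∀ s s', (M.lbl s).isSend → (M.lbl s').isSend → lin s s' →
    (∃ r r', M.msg s r ∧ M.msg s' r' ∧ lin r r') ∨ ¬ M.Matched s'

/-- An n-1 (mailbox) MSC: one having a mailbox linearization. -/
def IsMailbox (M : PreMSC P Msg) : Prop := ∃ lin, M.IsLin lin ∧ M.MailboxCond lin

/-- A 1-n MSC: one having a 1-n linearization. -/
def IsOneN (M : PreMSC P Msg) : Prop := ∃ lin, M.IsLin lin ∧ M.OneNCond lin

/-- An n-n MSC: one having an n-n linearization. -/
def IsNN (M : PreMSC P Msg) : Prop := ∃ lin, M.IsLin lin ∧ M.NNCond lin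

/-- A peer-to-peer (1-1) MSC. -/
def IsPP (M : PreMSC P Msg) : Prop :=
  ∀ s s' p q, (M.lbl s).isSendFromTo p q → (M.lbl s').isSendFromTo p q →
    Relation.TransGen M.next s s' →
    (∃ r r', M.msg s r ∧ M.msg s' r' ∧ Relation.TransGen M.next r r') ∨ ¬ M.Matched s'

/-- A causally ordered MSC. -/
def IsCO (M : PreMSC P Msg) : Prop :=
  ∀ s s' q, (M.lbl s).sendTo q → (M.lbl s').sendTo q → M.hb s s' →
    (∃ r r', M.msg s r ∧ M.msg s' r' ∧ Relation.ReflTransGen M.next r r') ∨ ¬ M.Matched s'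

/-- An RSC MSC: no unmatched send events and some linearization in which every
send is immediately followed by its matching receive. -/
def IsRSC (M : PreMSC P Msg) : Prop :=
  (∀ e, (M.lbl e).isSend → M.Matched e) ∧
  ∃ lin, M.IsLin lin ∧
    ∀ s r, M.msg s r → lin s r ∧ ∀ e, lin s e → lin e r → e = s ∨ e = r

/-- The relation `↦_mb`. -/
def mbRel (M : PreMSC P Msg) (s s' : M.E) : Prop :=
  (∃ q, (M.lbl s).sendTo q ∧ (M.lbl s').sendTo q) ∧
  ((M.Matched s ∧ ¬ M.Matched s') ∨
    ∃ r₁ r₂, M.msg s r₁ ∧ M.msg s' r₂ ∧ Relation.TransGen M.next r₁ r₂)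

/-- The relation `↦_1n`. -/
def onenRel (M : PreMSC P Msg) (e₁ e₂ : M.E) : Prop :=
  ((M.lbl e₁).isSend ∧ (M.lbl e₂).isSend ∧ (M.lbl e₁).exec = (M.lbl e₂).exec ∧
    M.Matched e₁ ∧ ¬ M.Matched e₂) ∨
  (∃ s₁ s₂, M.msg s₁ e₁ ∧ M.msg s₂ e₂ ∧ (M.lbl s₁).exec = (M.lbl s₂).exec ∧
    Relation.TransGen M.next s₁ s₂)

/-- One step of `≺_mb`: the relation `→ ∪ ◁ ∪ ↦_mb`. -/
def mbStep (M : PreMSC P Msg) (a b : M.E) : Prop := M.next a b ∨ M.msg a b ∨ M.mbRel a b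

/-- One step of `⪯_1n`: the relation `→ ∪ ◁ ∪ ↦_1n`. -/
def onenStep (M : PreMSC P Msg) (a b : M.E) : Prop := M.next a b ∨ M.msg a b ∨ M.onenRel a b

/-- One step of `◅`: the relation `→ ∪ ◁ ∪ ↦_mb ∪ ↦_1n`. -/
def nnStep (M : PreMSC P Msg) (a b : M.E) : Prop :=
  M.next a b ∨ M.msg a b ∨ M.mbRel a b ∨ M.onenRel a b

/-- The relation `◅ := (→ ∪ ◁ ∪ ↦_mb ∪ ↦_1n)⁺`. -/
def nnRel (M : PreMSC P Msg) : M.E → M.E → Prop := Relation.TransGen M.nnStep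

/-- The relation `⋈`. -/
def nnBowtie (M : PreMSC P Msg) (e₁ e₂ : M.E) : Prop :=
  M.nnRel e₁ e₂ ∨
  ((∃ s₁ s₂, M.msg s₁ e₁ ∧ M.msg s₂ e₂ ∧ M.nnRel s₁ s₂) ∧ ¬ M.nnRel e₁ e₂) ∨
  ((∃ r₁ r₂, M.msg e₁ r₁ ∧ M.msg e₂ r₂ ∧ M.nnRel r₁ r₂) ∧ ¬ M.nnRel e₁ e₂) ∨
  ((M.lbl e₁).isSend ∧ M.Matched e₁ ∧ (M.lbl e₂).isSend ∧ ¬ M.Matched e₂ ∧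
    ¬ M.nnRel e₁ e₂)

/-- `lin` is `k`-bounded: for every send event `e` from `p` to `q`, the number
of sends from `p` to `q` up to `e` minus the number of receives of messages
from `p` to `q` up to `e` is at most `k`. -/
def KBounded (M : PreMSC P Msg) (k : ℕ) (lin : M.E → M.E → Prop) : Prop :=
  ∀ e p q m, M.lbl e = .send p q m →
    Set.ncard {f | lin f e ∧ (M.lbl f).isSendFromTo p q} ≤
      Set.ncard {f | lin f e ∧ (M.lbl f).isRecvFromTo p q} + k

/-- The relation `R_k` (`⇝_k` of Lohrey–Muscholl, asynchronous version):
`r R_k s` iff there is a chain `s₁ →⁺ … →⁺ s_k →⁺ s` of sends from `p` to `q`,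
at least one of them matched, `r` is a receive matching one of them, and `r`
is `→*`-before every receive matching one of them. -/
def RkRel (M : PreMSC P Msg) (k : ℕ) (r s : M.E) : Prop :=
  ∃ (p q : P) (σ : Fin (k + 1) → M.E),
    σ (Fin.last k) = s ∧
    (∀ i : Fin k, Relation.TransGen M.next (σ i.castSucc) (σ i.succ)) ∧
    (∀ i, (M.lbl (σ i)).isSendFromTo p q) ∧
    (∃ i, M.Matched (σ i)) ∧
    (∃ i, M.msg (σ i) r) ∧
    (∀ i f, M.msg (σ i) f → Relation.ReflTransGen M.next r f)

/-- `e` is the `n`-th (1-indexed) send event of channel `(p,q)`. -/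
def nthSend (M : PreMSC P Msg) (p q : P) (n : ℕ) (e : M.E) : Prop :=
  (M.lbl e).isSendFromTo p q ∧
  Set.ncard {f | (M.lbl f).isSendFromTo p q ∧ Relation.ReflTransGen M.next f e} = n

/-- `e` is the `n`-th (1-indexed) receive event of channel `(p,q)`. -/
def nthRecv (M : PreMSC P Msg) (p q : P) (n : ℕ) (e : M.E) : Prop :=
  (M.lbl e).isRecvFromTo p q ∧
  Set.ncard {f | (M.lbl f).isRecvFromTo p q ∧ Relation.ReflTransGen M.next f e} = n

/-- The relation `≺_B` for bound `k`: `r ≺_B s` iff for some `i ≥ 1` and some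
channel `(p,q)`, `r` is the `i`-th receive and `s` the `(i+k)`-th send of `(p,q)`. -/
def BRel (M : PreMSC P Msg) (k : ℕ) (r s : M.E) : Prop :=
  ∃ (p q : P) (i : ℕ), 1 ≤ i ∧ M.nthRecv p q i r ∧ M.nthSend p q (i + k) s

/-- For every channel `(p,q)` there are at most `k` unmatched sends from `p` to `q`. -/
def UnmatchedBounded (M : PreMSC P Msg) (k : ℕ) : Prop :=
  ∀ p q : P, Set.ncard {e | (M.lbl e).isSendFromTo p q ∧ ¬ M.Matched e} ≤ k

/-- The restriction of an MSC to a subset of its events. -/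
def restrict (M : PreMSC P Msg) (S : Set M.E) : PreMSC P Msg where
  E := S
  next := fun a b => M.next a.val b.val
  msg := fun a b => M.msg a.val b.val
  lbl := fun a => M.lbl a.val

/-- `S` is downward-closed for happens-before. -/
def DownClosed (M : PreMSC P Msg) (S : Set M.E) : Prop :=
  ∀ e f, M.hb e f → f ∈ S → e ∈ S

/-- `S` is downward-closed for `⪯_1n := (→ ∪ ◁ ∪ ↦_1n)*`. -/
def OneNDownClosed (M : PreMSC P Msg) (S : Set M.E) : Prop :=
  ∀ e f, Relation.ReflTransGen M.onenStep e f → f ∈ S → e ∈ S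

/-- The MSC contains a crown: a cyclic sequence of matched message pairs
`(s_i, r_i)`, of length at least 2, with `s_i < r_{i+1}` (indices mod `k`). -/
def HasCrown (M : PreMSC P Msg) : Prop :=
  ∃ (k : ℕ) (hk : 2 ≤ k) (s r : Fin k → M.E),
    (∀ i, M.msg (s i) (r i)) ∧
    ∀ i : Fin k, M.shb (s i) (r ⟨(i.val + 1) % k, Nat.mod_lt _ (by omega)⟩)

end PreMSC

end MSCPaper

/-!
A mailbox linearization orders every pair `s ↦_mb s'` as `s ⊏ s'`: the two clauses of `↦_mb`
are exactly the configurations that the mailbox condition forbids when `s' ⊑ s`. Hence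
`→ ∪ ◁ ∪ ↦_mb` lies in the strict part of a linear order and is acyclic. Conversely, if it is
acyclic, any linear extension of its reflexive-transitive closure is a linearization, and a
mailbox one: the receives of two matched sends to `q` lie on the process line of `q`, where
`→⁺` orders them, and `↦_mb` forces that order to agree with the order of the sends.
-/
theorem Relation.exists_linearOrder_le_of_acyclic {α : Type*} {r : α → α → Prop}
    (h : ∀ a, ¬ Relation.TransGen r a a) :
    ∃ s : α → α → Prop, IsLinearOrder α s ∧ Relation.ReflTransGen r ≤ s :=
  haveI : IsPartialOrder α (Relation.ReflTransGen r) :=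
    { refl := fun _ => Relation.ReflTransGen.refl
      trans := fun _ _ _ => Relation.ReflTransGen.trans
      antisymm := fun a b hab hba => by
        rcases Relation.reflTransGen_iff_eq_or_transGen.mp hab with rfl | hab
        · rfl
        rcases Relation.reflTransGen_iff_eq_or_transGen.mp hba with rfl | hba
        · rfl
        exact absurd (hab.trans hba) (h a) }
  extend_partialOrder _

namespace MSCPaper

namespace PreMSC

variable {P Msg : Type} {M : PreMSC P Msg}

theorem hb_of_transGen_next {a b : M.E} (h : Relation.TransGen M.next a b) : M.hb a b :=
  (Relation.TransGen.mono (fun _ _ => Or.inl) _ _ h).to_reflTransGen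

theorem hb_le_reflTransGen_mbStep : M.hb ≤ Relation.ReflTransGen M.mbStep :=
  Relation.ReflTransGen.mono fun _ _ h => h.imp_right Or.inl

namespace IsMSC

variable (hM : M.IsMSC)
include hM

theorem not_transGen_next_self (a : M.E) : ¬ Relation.TransGen M.next a a :=
  fun h => hM.hb_po a (Relation.TransGen.mono (fun _ _ => Or.inl) _ _ h)

theorem exec_eq_of_msg {s r : M.E} {q : P} (hsr : M.msg s r) (hs : (M.lbl s).sendTo q) :
    (M.lbl r).exec = q := by
  obtain ⟨p, m, hlbl⟩ := hs
  obtain ⟨p', q', m', hls, hlr⟩ := hM.msg_lbl s r hsr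
  rw [hlbl, Action.send.injEq] at hls
  rw [hlr, hls.2.1]
  rfl

theorem not_mbRel_self (a : M.E) : ¬ M.mbRel a a := by
  rintro ⟨-, ⟨hm, hnm⟩ | ⟨r₁, r₂, h₁, h₂, h₁₂⟩⟩
  · exact hnm hm
  · obtain rfl := hM.msg_functional a r₁ r₂ h₁ h₂
    exact hM.not_transGen_next_self r₁ h₁₂

theorem ne_of_mbStep {a b : M.E} (h : M.mbStep a b) : a ≠ b := by
  rintro rfl
  rcases h with h | h | h
  · exact hM.hb_po a (.single (Or.inl h))
  · exact hM.hb_po a (.single (Or.inr h))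
  · exact hM.not_mbRel_self a h

end IsMSC

theorem IsLin.not_transGen_self {lin : M.E → M.E → Prop} (hlin : M.IsLin lin)
    {r : M.E → M.E → Prop} (hr : ∀ a b, r a b → lin a b ∧ a ≠ b) (e : M.E) :
    ¬ Relation.TransGen r e e := by
  have : IsTrans M.E fun a b => lin a b ∧ a ≠ b := ⟨fun a b c ⟨hab, _⟩ ⟨hbc, hbc'⟩ =>
    ⟨hlin.trans a b c hab hbc, by rintro rfl; exact hbc' (hlin.antisymm b a hbc hab)⟩⟩
  exact fun h => (Relation.transGen_minimal hr e e h).2 rfl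

theorem IsLin.of_isLinearOrder {s : M.E → M.E → Prop} (hs : IsLinearOrder M.E s)
    (hhb : M.hb ≤ s) : M.IsLin s :=
  ⟨refl_of s, fun _ _ _ => trans_of s, fun _ _ => antisymm_of s, total_of s, hhb⟩

theorem MailboxCond.le_of_mbStep (hM : M.IsMSC) {lin : M.E → M.E → Prop} (hlin : M.IsLin lin)
    (hmb : M.MailboxCond lin) {a b : M.E} (h : M.mbStep a b) : lin a b := by
  rcases h with h | h | ⟨⟨q, hqa, hqb⟩, hcase⟩
  · exact hlin.hb_le a b (.single (Or.inl h))
  · exact hlin.hb_le a b (.single (Or.inr h))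
  refine (hlin.total a b).resolve_right fun hba => ?_
  rcases hmb b a q hqb hqa hba with ⟨r, r', hbr, har', hrr'⟩ | hna
  · rcases hcase with ⟨-, hnb⟩ | ⟨r₁, r₂, h₁, h₂, h₁₂⟩
    · exact hnb ⟨r, hbr⟩
    · obtain rfl := hM.msg_functional a _ _ har' h₁
      obtain rfl := hM.msg_functional b _ _ hbr h₂
      obtain rfl := hlin.antisymm _ _ hrr' (hlin.hb_le _ _ (hb_of_transGen_next h₁₂))
      exact hM.not_transGen_next_self _ h₁₂
  · rcases hcase with ⟨hma, -⟩ | ⟨r₁, -, h₁, -, -⟩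
    · exact hna hma
    · exact hna ⟨r₁, h₁⟩

theorem IsLin.mailboxCond_of_mbRel_le (hM : M.IsMSC) {lin : M.E → M.E → Prop}
    (hlin : M.IsLin lin) (hmb : M.mbRel ≤ lin) : M.MailboxCond lin := by
  intro s₁ s₂ q hq₁ hq₂ h₁₂
  by_cases hm₂ : M.Matched s₂
  swap; · exact Or.inr hm₂
  obtain ⟨r₂, hr₂⟩ := hm₂
  have hback : M.mbRel s₂ s₁ → s₁ = s₂ := fun h => hlin.antisymm _ _ h₁₂ (hmb _ _ h)
  by_cases hm₁ : M.Matched s₁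
  · obtain ⟨r₁, hr₁⟩ := hm₁
    refine Or.inl ⟨r₁, r₂, hr₁, hr₂, ?_⟩
    by_cases hr : r₁ = r₂
    · exact hr ▸ hlin.refl r₁
    have hexec := (hM.exec_eq_of_msg hr₁ hq₁).trans (hM.exec_eq_of_msg hr₂ hq₂).symm
    rcases hM.proc_total r₁ r₂ hexec hr with h | h
    · exact hlin.hb_le _ _ (hb_of_transGen_next h)
    · obtain rfl := hback ⟨⟨q, hq₂, hq₁⟩, Or.inr ⟨r₂, r₁, hr₂, hr₁, h⟩⟩
      exact absurd (hM.msg_functional _ _ _ hr₁ hr₂) hr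
  · obtain rfl := hback ⟨⟨q, hq₂, hq₁⟩, Or.inl ⟨⟨r₂, hr₂⟩, hm₁⟩⟩
    exact absurd ⟨r₂, hr₂⟩ hm₁

end PreMSC

/-- An MSC is an n-1 (mailbox) MSC iff
`≺_mb := (→ ∪ ◁ ∪ ↦_mb)⁺` is irreflexive (i.e. `→ ∪ ◁ ∪ ↦_mb` is acyclic). -/
theorem mailbox_iff_mbStep_acyclic {P Msg : Type} (M : PreMSC P Msg) (hM : M.IsMSC) :
    M.IsMailbox ↔ ∀ e, ¬ Relation.TransGen M.mbStep e e := by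
  constructor
  · rintro ⟨lin, hlin, hmb⟩
    exact hlin.not_transGen_self fun a b h => ⟨hmb.le_of_mbStep hM hlin h, hM.ne_of_mbStep h⟩
  · intro hacyc
    obtain ⟨s, hs, hle⟩ := Relation.exists_linearOrder_le_of_acyclic hacyc
    have hlin := PreMSC.IsLin.of_isLinearOrder hs (PreMSC.hb_le_reflTransGen_mbStep.trans hle)
    refine ⟨s, hlin, hlin.mailboxCond_of_mbRel_le hM fun a b h => ?_⟩
    exact hle a b (.single (.inr (.inr h)))

end MSCPaper
end

section
/- Every n-1 (mailbox) MSC without unmatched send events is a 1-n MSC. -/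
/-!
An MSC is 1-n as soon as `⪯_1n = (→ ∪ ◁ ∪ ↦_1n)*` is acyclic: any linear extension of it
(Szpilrajn) is a 1-n linearization once all sends are matched. A cycle is excluded by showing
that every nonempty happens-before-upward-closed set `W` of events has an element without a
`⪯_1n`-predecessor in `W` (apply this to the events reachable from the cycle).

Otherwise every hb-minimal element of `W` is a receive blocked by an earlier send of its sender
whose receive is still in `W`. Take such a minimal element whose send `sₘ` comes first in a
mailbox linearization `⊑`, and a blocking send `s' →⁺ sₘ` with receive `r' ∈ W`; then no event
of `W` is `⊑ s'`. Let `u` be the first event of `W` on the process line up to `r'`. Either `u` is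
hb-minimal in `W`, or it receives a message sent from `W`. In both cases the mailbox condition,
applied to the receives `u →* r'` of one process, puts the sender of `u` at or before `s'` in
`⊑`: this contradicts the choice of `sₘ` in the first case, and the fact that no event of `W`
is `⊑ s'` in the second.
-/

namespace MSCPaper

namespace PreMSC

variable {P Msg : Type} {M : PreMSC P Msg}

theorem reflTransGen_onenStep_of_hb {a b : M.E} (h : M.hb a b) :
    Relation.ReflTransGen M.onenStep a b :=
  Relation.ReflTransGen.mono (fun _ _ => Or.imp_right Or.inl) a b h

namespace IsMSC

theorem msg_left_unique (hM : M.IsMSC) {s s' r : M.E} (h : M.msg s r) (h' : M.msg s' r) :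
    s = s' := by
  obtain ⟨p, q, m, -, hr⟩ := hM.msg_lbl s r h
  exact (hM.recv_matched r ⟨p, q, m, hr⟩).unique h h'

theorem sendTo_exec_of_msg (hM : M.IsMSC) {s r : M.E} (h : M.msg s r) :
    (M.lbl s).sendTo (M.lbl r).exec := by
  obtain ⟨p, q, m, hs, hr⟩ := hM.msg_lbl s r h
  exact ⟨p, m, by rw [hs, hr]; rfl⟩

theorem exec_eq_of_reflTransGen_next (hM : M.IsMSC) {a b : M.E}
    (h : Relation.ReflTransGen M.next a b) : (M.lbl a).exec = (M.lbl b).exec := by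
  induction h with
  | refl => rfl
  | tail _ hbc ih => exact ih.trans (hM.next_exec _ _ hbc)

theorem not_lin_of_shb (hM : M.IsMSC) {lin : M.E → M.E → Prop} (hlin : M.IsLin lin)
    {a b : M.E} (hab : M.shb a b) : ¬ lin b a := fun hba => by
  obtain rfl := hlin.antisymm a b (hlin.hb_le a b hab.to_reflTransGen) hba
  exact hM.hb_po a hab

theorem wellFounded_shb (hM : M.IsMSC) : WellFounded M.shb := by
  have := hM.finite
  have : Std.Irrefl (Relation.TransGen M.step) := ⟨hM.hb_po⟩
  exact Finite.wellFounded_of_trans_of_irrefl (Relation.TransGen M.step)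

theorem exists_hbMinimal_hb (hM : M.IsMSC) {W : Set M.E} {x : M.E} (hx : x ∈ W) :
    ∃ m ∈ W, M.hb m x ∧ ∀ y, M.shb y m → y ∉ W := by
  obtain ⟨m, ⟨hmW, hmx⟩, hmin⟩ :=
    hM.wellFounded_shb.has_min {y | y ∈ W ∧ M.hb y x} ⟨x, hx, .refl⟩
  exact ⟨m, hmW, hmx, fun y hym hyW => hmin y ⟨hyW, hym.to_reflTransGen.trans hmx⟩ hym⟩

end IsMSC

theorem IsLin.exists_forall_lin [Finite M.E] {lin : M.E → M.E → Prop} (hlin : M.IsLin lin)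
    {S : Set M.E} (hS : S.Nonempty) : ∃ m ∈ S, ∀ x ∈ S, lin m x := by
  let lt : M.E → M.E → Prop := fun a b => lin a b ∧ a ≠ b
  have : IsTrans M.E lt := ⟨fun a b c hab hbc =>
    ⟨hlin.trans a b c hab.1 hbc.1, by rintro rfl; exact hab.2 (hlin.antisymm a b hab.1 hbc.1)⟩⟩
  have : Std.Irrefl lt := ⟨fun a h => h.2 rfl⟩
  obtain ⟨m, hm, hmin⟩ := (Finite.wellFounded_of_trans_of_irrefl lt).has_min S hS
  refine ⟨m, hm, fun x hx => ?_⟩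
  by_contra hmx
  exact hmin x hx ⟨(hlin.total m x).resolve_left hmx, by rintro rfl; exact hmx (hlin.refl x)⟩

theorem MailboxCond.lin_of_lin_recv {lin : M.E → M.E → Prop} (hmb : M.MailboxCond lin)
    (hM : M.IsMSC) (hlin : M.IsLin lin) {t u s r : M.E} (htu : M.msg t u) (hsr : M.msg s r)
    (hexec : (M.lbl u).exec = (M.lbl r).exec) (hur : lin u r) : lin t s := by
  refine (hlin.total t s).elim id fun hst => ?_
  have ht := hM.sendTo_exec_of_msg htu
  rw [hexec] at ht
  rcases hmb s t _ (hM.sendTo_exec_of_msg hsr) ht hst with ⟨r₁, u₁, hsr₁, htu₁, hru⟩ | hunm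
  · obtain rfl := hM.msg_functional _ _ _ hsr hsr₁
    obtain rfl := hM.msg_functional _ _ _ htu htu₁
    obtain rfl := hlin.antisymm _ _ hur hru
    obtain rfl := hM.msg_left_unique htu hsr
    exact hlin.refl t
  · exact absurd ⟨u, htu⟩ hunm

theorem hbMinimal_or_exists_step {W : Set M.E} (hW : ∀ e f, M.hb e f → e ∈ W → f ∈ W)
    (u : M.E) : (∀ y, M.shb y u → y ∉ W) ∨ ∃ y ∈ W, M.step y u := by
  refine or_iff_not_imp_left.2 fun hu => ?_
  push Not at hu
  obtain ⟨f, hfu, hfW⟩ := hu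
  obtain ⟨y, hfy, hyu⟩ := Relation.TransGen.tail'_iff.1 hfu
  exact ⟨y, hW f y hfy hfW, hyu⟩

theorem exists_sends_of_onenStep_of_hbMinimal (hunm : ∀ e, (M.lbl e).isSend → M.Matched e)
    {W : Set M.E} {y m : M.E} (hmin : ∀ z, M.shb z m → z ∉ W) (hyW : y ∈ W)
    (hym : M.onenStep y m) :
    ∃ s₁ s₂, M.msg s₂ m ∧ Relation.TransGen M.next s₁ s₂ ∧ M.msg s₁ y := by
  rcases hym with hym | hym | ⟨-, hm, -, -, hm'⟩ | ⟨s₁, s₂, hs₁y, hs₂m, -, hs₁s₂⟩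
  · exact absurd hyW (hmin y (.single (.inl hym)))
  · exact absurd hyW (hmin y (.single (.inr hym)))
  · exact absurd (hunm m hm) hm'
  · exact ⟨s₁, s₂, hs₂m, hs₁s₂, hs₁y⟩

theorem exists_mem_forall_not_onenStep (hM : M.IsMSC)
    (hunm : ∀ e, (M.lbl e).isSend → M.Matched e) {lin : M.E → M.E → Prop}
    (hlin : M.IsLin lin) (hmb : M.MailboxCond lin) {W : Set M.E} (hne : W.Nonempty)
    (hW : ∀ e f, M.hb e f → e ∈ W → f ∈ W) : ∃ e ∈ W, ∀ f ∈ W, ¬ M.onenStep f e := by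
  have := hM.finite
  by_contra! hpred
  have blocked : ∀ m ∈ W, (∀ y, M.shb y m → y ∉ W) →
      ∃ s₁ s₂ r₁, M.msg s₂ m ∧ Relation.TransGen M.next s₁ s₂ ∧ M.msg s₁ r₁ ∧ r₁ ∈ W := by
    intro m hmW hmin
    obtain ⟨y, hyW, hym⟩ := hpred m hmW
    obtain ⟨s₁, s₂, hs₂m, hs₁s₂, hs₁y⟩ := exists_sends_of_onenStep_of_hbMinimal hunm hmin hyW hym
    exact ⟨s₁, s₂, y, hs₂m, hs₁s₂, hs₁y, hyW⟩
  obtain ⟨x, hx⟩ := hne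
  obtain ⟨m₀, hm₀W, -, hm₀min⟩ := hM.exists_hbMinimal_hb hx
  obtain ⟨-, t₀, -, ht₀, -⟩ := blocked m₀ hm₀W hm₀min
  obtain ⟨sₘ, ⟨m, hmW, hmmin, hsₘ⟩, hsₘ_least⟩ := hlin.exists_forall_lin
    (S := {t | ∃ m ∈ W, (∀ y, M.shb y m → y ∉ W) ∧ M.msg t m}) ⟨t₀, m₀, hm₀W, hm₀min, ht₀⟩
  obtain ⟨s', s₂, r', hs₂m, hs's₂, hs'r', hr'W⟩ := blocked m hmW hmmin
  obtain rfl := hM.msg_left_unique hsₘ hs₂m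
  have hs'sₘ : M.shb s' sₘ := Relation.TransGen.mono (fun _ _ => Or.inl) _ _ hs's₂
  have not_le_s' : ∀ x ∈ W, ¬ lin x s' := by
    intro x hxW hxs'
    obtain ⟨m₁, hm₁W, hm₁x, hm₁min⟩ := hM.exists_hbMinimal_hb hxW
    obtain ⟨-, t₁, -, ht₁, -⟩ := blocked m₁ hm₁W hm₁min
    have ht₁x : lin t₁ x :=
      hlin.hb_le _ _ (Relation.ReflTransGen.head (Or.inr ht₁ : M.step t₁ m₁) hm₁x)
    exact hM.not_lin_of_shb hlin hs'sₘ <| hlin.trans _ _ _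
      (hsₘ_least t₁ ⟨m₁, hm₁W, hm₁min, ht₁⟩) (hlin.trans _ _ _ ht₁x hxs')
  obtain ⟨u, ⟨huW, hur'⟩, hu_first⟩ := hM.wellFounded_shb.has_min
    {u | u ∈ W ∧ Relation.ReflTransGen M.next u r'} ⟨r', hr'W, .refl⟩
  have sender_le_s' : ∀ {t}, M.msg t u → lin t s' := fun htu =>
    hmb.lin_of_lin_recv hM hlin htu hs'r' (hM.exec_eq_of_reflTransGen_next hur')
      (hlin.hb_le _ _ (Relation.ReflTransGen.mono (fun _ _ => Or.inl) _ _ hur'))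
  rcases hbMinimal_or_exists_step hW u with humin | ⟨y, hyW, hyu | hyu⟩
  · obtain ⟨-, t, -, htu, -⟩ := blocked u huW humin
    exact hM.not_lin_of_shb hlin hs'sₘ
      (hlin.trans _ _ _ (hsₘ_least t ⟨u, huW, humin, htu⟩) (sender_le_s' htu))
  · exact hu_first y ⟨hyW, .head hyu hur'⟩ (.single (.inl hyu))
  · exact not_le_s' y hyW (sender_le_s' hyu)

theorem onenStep_acyclic_of_isMailbox (hM : M.IsMSC)
    (hunm : ∀ e, (M.lbl e).isSend → M.Matched e) (h : M.IsMailbox) (e : M.E) :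
    ¬ Relation.TransGen M.onenStep e e := by
  intro hcyc
  obtain ⟨lin, hlin, hmb⟩ := h
  obtain ⟨x, hx, hx_source⟩ := exists_mem_forall_not_onenStep hM hunm hlin hmb
    (W := {x | Relation.TransGen M.onenStep e x}) ⟨e, hcyc⟩
    fun a b hab ha => ha.trans_left (reflTransGen_onenStep_of_hb hab)
  obtain ⟨y, hey, hyx⟩ := Relation.TransGen.tail'_iff.1 hx
  exact hx_source y (hcyc.trans_left hey) hyx

theorem isOneN_of_onenStep_acyclic (hunm : ∀ e, (M.lbl e).isSend → M.Matched e)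
    (hacyc : ∀ e, ¬ Relation.TransGen M.onenStep e e) : M.IsOneN := by
  have : IsPartialOrder M.E (Relation.ReflTransGen M.onenStep) :=
    { antisymm := fun a b hab hba => by
        rcases Relation.reflTransGen_iff_eq_or_transGen.1 hab with rfl | hab
        · rfl
        · exact absurd (hab.trans_left hba) (hacyc a) }
  obtain ⟨lin, hlin, hle⟩ := extend_partialOrder (Relation.ReflTransGen M.onenStep)
  refine ⟨lin, ⟨refl_of lin, fun _ _ _ => trans_of lin, fun _ _ => antisymm_of lin,
    total_of lin, fun e f h => hle e f (reflTransGen_onenStep_of_hb h)⟩, ?_⟩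
  intro s s' hs _ hexec hss'
  refine or_iff_not_imp_right.2 fun hs' => ?_
  obtain ⟨r', hr'⟩ := not_not.1 hs'
  obtain ⟨r, hr⟩ := hunm s hs
  exact ⟨r, r', hr, hr', hle r r' (.single (.inr (.inr (.inr ⟨s, s', hr, hr', hexec, hss'⟩))))⟩

end PreMSC

/-- Every n-1 (mailbox) MSC without unmatched send events is a
1-n MSC. -/
theorem isOneN_of_isMailbox_noUnmatched {P Msg : Type} (M : PreMSC P Msg)
    (hM : M.IsMSC) (hunm : ∀ e, (M.lbl e).isSend → M.Matched e)
    (h : M.IsMailbox) : M.IsOneN :=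
  PreMSC.isOneN_of_onenStep_acyclic hunm (PreMSC.onenStep_acyclic_of_isMailbox hM hunm h)

end MSCPaper
end

section
/- Let k ≥ 1. An MSC M is universally k-bounded (all of its linearizations are k-bounded) if and only if R_k ⊆ ≤ and, for each pair of processes (p,q), there are at most k unmatched send events whose action is a send from p to q. -/
/-!
At a send `e` of channel `(p,q)` in a linearization `⊑`, the messages of `(p,q)` sent up to
`e` are either received up to `e` or still in transit, so `⊑` is `k`-bounded iff at most `k`
messages are ever in transit at a send. If `r R_k s` but `r ≰ s`, some linearization puts `s`
before `r`, and then the `k + 1` messages of the chain ending in `s` are all in transit at `s`;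
likewise, `k + 1` unmatched sends of a channel are all in transit at the last of them.
Conversely, `k + 1` messages in transit at `e` form a chain on process `p`: if none is matched
there are `k + 1` unmatched sends, and otherwise the earliest receive `r` of one of them
satisfies `r R_k s` for the last one `s`, so that `r ≤ s ⊑ e`, contradicting that its message is
in transit.
-/

section StrictChains

variable {α : Type*} [Finite α] {r : α → α → Prop} [IsStrictOrder α r] {s : Set α}

theorem IsChain.exists_forall_eq_or_rel (hs : IsChain r s) (hne : s.Nonempty) :
    ∃ m ∈ s, ∀ x ∈ s, x = m ∨ r m x := by
  obtain ⟨m, hm, hmin⟩ := (Finite.wellFounded_of_trans_of_irrefl r).has_min s hne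
  refine ⟨m, hm, fun x hx => or_iff_not_imp_left.2 fun hxm => ?_⟩
  exact (hs hm hx (Ne.symm hxm)).resolve_right (hmin x hx)

theorem IsChain.exists_fin_chain (hs : IsChain r s) (n : ℕ) (hn : n + 1 ≤ s.ncard) :
    ∃ σ : Fin (n + 1) → α, (∀ i, σ i ∈ s) ∧
      ∀ i : Fin n, r (σ i.castSucc) (σ i.succ) := by
  induction n generalizing s with
  | zero =>
    obtain ⟨x, hx⟩ : s.Nonempty := Set.nonempty_of_ncard_ne_zero (by omega)
    exact ⟨fun _ => x, fun _ => hx, Fin.elim0⟩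
  | succ n ih =>
    have hne : s.Nonempty := Set.nonempty_of_ncard_ne_zero (by omega)
    obtain ⟨m, hm, hmin⟩ := hs.exists_forall_eq_or_rel hne
    obtain ⟨σ, hσs, hσ⟩ := ih (hs.mono Set.sdiff_subset)
      (by rw [Set.ncard_sdiff_singleton_of_mem hm]; omega)
    refine ⟨Fin.cons m σ, Fin.cases hm fun i => (hσs i).1, Fin.cases ?_ fun i => ?_⟩
    · exact (hmin _ (hσs 0).1).resolve_left (hσs 0).2
    · simpa [← Fin.succ_castSucc] using hσ i

end StrictChains

theorem Fin.ncard_range_of_rel_succ {α : Type*} {r : α → α → Prop} [IsStrictOrder α r]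
    {n : ℕ} {σ : Fin (n + 1) → α} (hσ : ∀ i : Fin n, r (σ i.castSucc) (σ i.succ)) :
    (Set.range σ).ncard = n + 1 := by
  have hlt := (Fin.liftFun_iff_succ r).2 hσ
  refine (Set.ncard_range_of_injective fun i j hij => ?_).trans (Nat.card_fin _)
  by_contra hne
  rcases lt_or_gt_of_ne hne with h | h
  · exact irrefl _ (hij ▸ hlt h)
  · exact irrefl _ (hij ▸ hlt h)

namespace MSCPaper

namespace Action

variable {P Msg : Type} {p q : P} {a : Action P Msg}

theorem exec_eq_of_isSendFromTo (h : a.isSendFromTo p q) : a.exec = p := by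
  obtain ⟨m, rfl⟩ := h
  rfl

theorem exec_eq_of_isRecvFromTo (h : a.isRecvFromTo p q) : a.exec = q := by
  obtain ⟨m, rfl⟩ := h
  rfl

theorem ne_of_isSendFromTo_of_isRecvFromTo {b : Action P Msg} {p' q' : P}
    (ha : a.isSendFromTo p q) (hb : b.isRecvFromTo p' q') : a ≠ b := by
  obtain ⟨m, rfl⟩ := ha
  obtain ⟨m', rfl⟩ := hb
  nofun

end Action

namespace PreMSC

variable {P Msg : Type} {M : PreMSC P Msg}

theorem hb_of_reflTransGen_next {a b : M.E} (h : Relation.ReflTransGen M.next a b) : M.hb a b :=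
  Relation.ReflTransGen.mono (fun _ _ => Or.inl) _ _ h

theorem hb_of_msg {a b : M.E} (h : M.msg a b) : M.hb a b :=
  .single (Or.inr h)

theorem exists_isLin_of_hb_le (R : M.E → M.E → Prop) [IsPartialOrder M.E R]
    (hR : ∀ a b, M.hb a b → R a b) : ∃ lin, M.IsLin lin ∧ ∀ a b, R a b → lin a b := by
  obtain ⟨lin, _, hRlin⟩ := extend_partialOrder R
  exact ⟨lin, ⟨refl_of lin, fun _ _ _ => trans_of lin, fun _ _ => antisymm_of lin,
    total_of lin, fun a b h => hRlin a b (hR a b h)⟩, hRlin⟩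

def inTransit (M : PreMSC P Msg) (lin : M.E → M.E → Prop) (e : M.E) (p q : P) : Set M.E :=
  {f | lin f e ∧ (M.lbl f).isSendFromTo p q ∧ ∀ r, M.msg f r → ¬ lin r e}

namespace IsMSC

variable (hM : M.IsMSC)
include hM

theorem isStrictOrder_transGen_next : IsStrictOrder M.E (Relation.TransGen M.next) where
  irrefl e h := hM.hb_po e (Relation.TransGen.mono (fun _ _ => Or.inl) _ _ h)

theorem hb_antisymm {a b : M.E} (hab : M.hb a b) (hba : M.hb b a) : a = b := by
  rcases Relation.reflTransGen_iff_eq_or_transGen.1 hab with h | hab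
  · exact h.symm
  rcases Relation.reflTransGen_iff_eq_or_transGen.1 hba with h | hba
  · exact h
  exact (hM.hb_po a (hab.trans hba)).elim

theorem isPartialOrder_hb : IsPartialOrder M.E M.hb where
  refl _ := .refl
  trans _ _ _ := .trans
  antisymm _ _ := hM.hb_antisymm

theorem exists_isLin : ∃ lin, M.IsLin lin :=
  have := hM.isPartialOrder_hb
  (exists_isLin_of_hb_le M.hb fun _ _ => id).imp fun _ h => h.1

theorem exists_isLin_rel_of_not_hb {a b : M.E} (hab : ¬ M.hb a b) :
    ∃ lin, M.IsLin lin ∧ lin b a := by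
  -- adding `b ≤ a` to happens-before creates no cycle, as a cycle would give `a ≤ b`
  let R x y := M.hb x y ∨ (M.hb x b ∧ M.hb a y)
  have : IsPartialOrder M.E R :=
    { refl _ := .inl .refl
      trans x y z := by
        rintro (hxy | ⟨hxb, hay⟩) (hyz | ⟨hyb, haz⟩)
        · exact .inl (hxy.trans hyz)
        · exact .inr ⟨hxy.trans hyb, haz⟩
        · exact .inr ⟨hxb, hay.trans hyz⟩
        · exact (hab (hay.trans hyb)).elim
      antisymm x y := by
        rintro (hxy | ⟨hxb, hay⟩) (hyx | ⟨hyb, hax⟩)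
        · exact hM.hb_antisymm hxy hyx
        · exact (hab (hax.trans (hxy.trans hyb))).elim
        · exact (hab (hay.trans (hyx.trans hxb))).elim
        · exact (hab (hay.trans hyb)).elim }
  obtain ⟨lin, hlin, hRlin⟩ := exists_isLin_of_hb_le R fun _ _ => .inl
  exact ⟨lin, hlin, hRlin b a (.inr ⟨.refl, .refl⟩)⟩

theorem isChain_of_exec_eq {p : P} {s : Set M.E} (hs : ∀ e ∈ s, (M.lbl e).exec = p) :
    IsChain (Relation.TransGen M.next) s :=
  fun e he f hf hef => hM.proc_total e f ((hs e he).trans (hs f hf).symm) hef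

theorem isRecvFromTo_of_msg {p q : P} {s r : M.E} (hsr : M.msg s r)
    (hs : (M.lbl s).isSendFromTo p q) : (M.lbl r).isRecvFromTo p q := by
  obtain ⟨p', q', m, hs', hr⟩ := hM.msg_lbl s r hsr
  obtain ⟨m', hm'⟩ := hs
  rw [hm'] at hs'
  cases hs'
  exact ⟨m, hr⟩

theorem isSendFromTo_of_msg {p q : P} {s r : M.E} (hsr : M.msg s r)
    (hr : (M.lbl r).isRecvFromTo p q) : (M.lbl s).isSendFromTo p q := by
  obtain ⟨p', q', m, hs, hr'⟩ := hM.msg_lbl s r hsr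
  obtain ⟨m', hm'⟩ := hr
  rw [hm'] at hr'
  cases hr'
  exact ⟨m, hs⟩

theorem ncard_sent_eq_ncard_received_add_ncard_inTransit {lin : M.E → M.E → Prop}
    (hlin : M.IsLin lin) (e : M.E) (p q : P) :
    {f | lin f e ∧ (M.lbl f).isSendFromTo p q}.ncard =
      {f | lin f e ∧ (M.lbl f).isRecvFromTo p q}.ncard + (M.inTransit lin e p q).ncard := by
  have := hM.finite
  choose! sender hsender using fun r (hr : (M.lbl r).isRecv) => (hM.recv_matched r hr).exists
  have hsender' : ∀ r, (M.lbl r).isRecvFromTo p q → M.msg (sender r) r := by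
    rintro r ⟨m, hm⟩
    exact hsender r ⟨p, q, m, hm⟩
  rw [← Set.ncard_inter_add_ncard_sdiff_eq_ncard _ {f | ∃ r, M.msg f r ∧ lin r e}]
  congr 1
  · -- a receive up to `e` corresponds, via its sender, to a send whose receive is up to `e`
    refine (Set.ncard_congr (fun r _ => sender r) (fun r hr => ?_) (fun r r' hr hr' h => ?_)
      (fun f hf => ?_)).symm
    · have hsr := hsender' r hr.2
      exact ⟨⟨hlin.trans _ _ _ (hlin.hb_le _ _ (hb_of_msg hsr)) hr.1,
        hM.isSendFromTo_of_msg hsr hr.2⟩, r, hsr, hr.1⟩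
    · have hsr' := hsender' r' hr'.2
      exact hM.msg_functional _ _ _ (h ▸ hsender' r hr.2) hsr'
    · obtain ⟨⟨-, hf⟩, r, hfr, hre⟩ := hf
      have hr := hM.isRecvFromTo_of_msg hfr hf
      refine ⟨r, ⟨hre, hr⟩, ?_⟩
      obtain ⟨m, hm⟩ := hr
      exact (hM.recv_matched r ⟨p, q, m, hm⟩).unique (hsender' r ⟨m, hm⟩) hfr
  · congr 1
    ext f
    simp [inTransit, and_assoc]

theorem kBounded_iff {lin : M.E → M.E → Prop} (hlin : M.IsLin lin) (k : ℕ) :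
    M.KBounded k lin ↔
      ∀ e p q m, M.lbl e = .send p q m → (M.inTransit lin e p q).ncard ≤ k := by
  refine forall₄_congr fun e p q m => imp_congr_right fun _ => ?_
  rw [hM.ncard_sent_eq_ncard_received_add_ncard_inTransit hlin]
  omega

theorem hb_of_rkRel {k : ℕ} (hall : ∀ lin, M.IsLin lin → M.KBounded k lin) {r s : M.E}
    (hrs : M.RkRel k r s) : M.hb r s := by
  have := hM.finite
  have := hM.isStrictOrder_transGen_next
  obtain ⟨p, q, σ, rfl, hchain, hσ, -, ⟨i₀, hi₀⟩, hfirst⟩ := hrs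
  by_contra hnot
  obtain ⟨lin, hlin, hsr⟩ := hM.exists_isLin_rel_of_not_hb hnot
  obtain ⟨m, hm⟩ := hσ (Fin.last k)
  have hsub : Set.range σ ⊆ M.inTransit lin (σ (Fin.last k)) p q := by
    rintro _ ⟨i, rfl⟩
    refine ⟨?_, hσ i, fun f hf hfs => ?_⟩
    · rcases (Fin.le_last i).eq_or_lt with rfl | hi
      · exact hlin.refl _
      · exact hlin.hb_le _ _ (hb_of_transGen_next ((Fin.liftFun_iff_succ _).2 hchain hi))
    · -- `r →* f ⊑ σ last ⊑ r`
      have hrs : r = σ (Fin.last k) := hlin.antisymm _ _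
        (hlin.trans _ _ _ (hlin.hb_le _ _ (hb_of_reflTransGen_next (hfirst i f hf))) hfs) hsr
      exact Action.ne_of_isSendFromTo_of_isRecvFromTo (hσ (Fin.last k))
        (hM.isRecvFromTo_of_msg hi₀ (hσ i₀)) (congrArg M.lbl hrs).symm
  have hcard := Set.ncard_le_ncard hsub
  rw [Fin.ncard_range_of_rel_succ hchain] at hcard
  have := (hM.kBounded_iff hlin k).1 (hall lin hlin) _ p q m hm
  omega

theorem unmatchedBounded {k : ℕ} (hall : ∀ lin, M.IsLin lin → M.KBounded k lin) :
    M.UnmatchedBounded k := by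
  have := hM.finite
  have := hM.isStrictOrder_transGen_next
  intro p q
  set U := {e | (M.lbl e).isSendFromTo p q ∧ ¬ M.Matched e}
  by_contra! hk
  have hUne : U.Nonempty := Set.nonempty_of_ncard_ne_zero (by omega)
  have hU : IsChain (Function.swap (Relation.TransGen M.next)) U :=
    (hM.isChain_of_exec_eq fun f hf => Action.exec_eq_of_isSendFromTo hf.1).symm
  obtain ⟨e, ⟨he, -⟩, hlast⟩ := hU.exists_forall_eq_or_rel hUne
  obtain ⟨lin, hlin⟩ := hM.exists_isLin
  have hsub : U ⊆ M.inTransit lin e p q := by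
    intro f hf
    refine ⟨?_, hf.1, fun r hfr _ => hf.2 ⟨r, hfr⟩⟩
    rcases hlast f hf with rfl | hfe
    · exact hlin.refl f
    · exact hlin.hb_le _ _ (hb_of_transGen_next hfe)
  obtain ⟨m, hm⟩ := he
  have := (hM.kBounded_iff hlin k).1 (hall lin hlin) e p q m hm
  have := Set.ncard_le_ncard hsub
  omega

theorem kBounded_of_rkRel {k : ℕ} (hRk : ∀ r s, M.RkRel k r s → M.hb r s)
    (hU : M.UnmatchedBounded k) {lin : M.E → M.E → Prop} (hlin : M.IsLin lin) :
    M.KBounded k lin := by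
  have := hM.finite
  have := hM.isStrictOrder_transGen_next
  rw [hM.kBounded_iff hlin]
  intro e p q m _
  by_contra! hk
  obtain ⟨σ, hσ, hchain⟩ := (hM.isChain_of_exec_eq (s := M.inTransit lin e p q)
    fun f hf => Action.exec_eq_of_isSendFromTo hf.2.1).exists_fin_chain k (by omega)
  by_cases hmatched : ∃ i, M.Matched (σ i)
  · -- the first receive of a message of `σ` is `R_k`-before the last send of `σ`
    set T := {f | ∃ i, M.msg (σ i) f}
    have hTne : T.Nonempty := by
      obtain ⟨i, f, hf⟩ := hmatched
      exact ⟨f, i, hf⟩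
    have hT : IsChain (Relation.TransGen M.next) T := hM.isChain_of_exec_eq fun f ⟨j, hf⟩ =>
      Action.exec_eq_of_isRecvFromTo (hM.isRecvFromTo_of_msg hf (hσ j).2.1)
    obtain ⟨r, ⟨i, hir⟩, hfirst⟩ := hT.exists_forall_eq_or_rel hTne
    have hrs : M.hb r (σ (Fin.last k)) := by
      refine hRk _ _
        ⟨p, q, σ, rfl, hchain, fun j => (hσ j).2.1, hmatched, ⟨i, hir⟩, fun j f hf => ?_⟩
      rcases hfirst f ⟨j, hf⟩ with rfl | hrf
      · exact .refl
      · exact hrf.to_reflTransGen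
    exact (hσ i).2.2 r hir (hlin.trans _ _ _ (hlin.hb_le _ _ hrs) (hσ (Fin.last k)).1)
  · push Not at hmatched
    have hsub : Set.range σ ⊆ {f | (M.lbl f).isSendFromTo p q ∧ ¬ M.Matched f} := by
      rintro _ ⟨i, rfl⟩
      exact ⟨(hσ i).2.1, hmatched i⟩
    have hcard := Set.ncard_le_ncard hsub
    rw [Fin.ncard_range_of_rel_succ hchain] at hcard
    have := hU p q
    omega

end IsMSC

end PreMSC

theorem universallyKBounded_iff_general {P Msg : Type} (M : PreMSC P Msg) (hM : M.IsMSC)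
    (k : ℕ) :
    (∀ lin, M.IsLin lin → M.KBounded k lin) ↔
      ((∀ r s, M.RkRel k r s → M.hb r s) ∧ M.UnmatchedBounded k) :=
  ⟨fun hall => ⟨fun _ _ => hM.hb_of_rkRel hall, hM.unmatchedBounded hall⟩,
    fun ⟨hRk, hU⟩ _ hlin => hM.kBounded_of_rkRel hRk hU hlin⟩

/-- For `k ≥ 1`, an MSC is universally `k`-bounded (all of its
linearizations are `k`-bounded) iff `R_k ⊆ ≤` and each channel `(p,q)` has at
most `k` unmatched sends. -/
theorem universallyKBounded_iff {P Msg : Type} (M : PreMSC P Msg) (hM : M.IsMSC)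
    (k : ℕ) (hk : 1 ≤ k) :
    (∀ lin, M.IsLin lin → M.KBounded k lin) ↔
      ((∀ r s, M.RkRel k r s → M.hb r s) ∧ M.UnmatchedBounded k) :=
  universallyKBounded_iff_general M hM k

end MSCPaper
end

section
/- Every 1-n-prefix of a 1-n MSC is a 1-n MSC. -/
/-!
Restricting an MSC to a happens-before-closed set of events gives an MSC, and a linearization
restricts to a linearization. For the 1-n condition, let `s →⁺ s'` be sends in the prefix whose
receives `r ⊑ r'` exist in the whole MSC. If `r'` lies in the prefix, then so does `r`, because
`r ↦_1n r'`; otherwise `s'` is unmatched in the prefix. Either way the restricted linearization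
satisfies the condition.
-/

theorem Relation.TransGen.subtype_of_closed {α : Type*} {r : α → α → Prop} {S : Set α}
    (hS : ∀ a b, r a b → b ∈ S → a ∈ S) {a b : α} (h : TransGen r a b) (ha : a ∈ S) :
    ∀ hb : b ∈ S, TransGen (fun x y : S => r x y) ⟨a, ha⟩ ⟨b, hb⟩ := by
  induction h with
  | single hab => exact fun _ => .single hab
  | tail _ hcb ih => exact fun hb => (ih (hS _ _ hcb hb)).tail hcb

namespace MSCPaper.PreMSC

open Relation

variable {P Msg : Type} {M : PreMSC P Msg} {S : Set M.E}

theorem OneNDownClosed.downClosed (hS : M.OneNDownClosed S) : M.DownClosed S :=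
  fun e f hef => hS e f (ReflTransGen.mono (fun _ _ h => h.imp_right Or.inl) _ _ hef)

theorem DownClosed.mem_of_next (hS : M.DownClosed S) {e f : M.E} (h : M.next e f)
    (hf : f ∈ S) : e ∈ S :=
  hS e f (.single (.inl h)) hf

theorem DownClosed.mem_of_msg (hS : M.DownClosed S) {e f : M.E} (h : M.msg e f)
    (hf : f ∈ S) : e ∈ S :=
  hS e f (.single (.inr h)) hf

theorem transGen_next_restrict_iff (hS : M.DownClosed S) {a b : (M.restrict S).E} :
    TransGen (M.restrict S).next a b ↔ TransGen M.next a.val b.val :=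
  ⟨fun h => h.lift Subtype.val fun _ _ h => h,
    fun h => h.subtype_of_closed (fun _ _ => hS.mem_of_next) a.2 b.2⟩

theorem IsMSC.restrict (hM : M.IsMSC) (hS : M.DownClosed S) : (M.restrict S).IsMSC where
  finite := have := hM.finite; Subtype.finite
  next_exec e f h := hM.next_exec e.val f.val h
  proc_total e f hexec hne := by
    simpa only [transGen_next_restrict_iff hS] using
      hM.proc_total e.val f.val hexec (Subtype.coe_injective.ne hne)
  next_cover e f h := by
    rintro ⟨g, heg, hgf⟩
    exact hM.next_cover e.val f.val h
      ⟨g.val, (transGen_next_restrict_iff hS).1 heg, (transGen_next_restrict_iff hS).1 hgf⟩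
  msg_lbl e f h := hM.msg_lbl e.val f.val h
  recv_matched f hf := by
    obtain ⟨e, he, huniq⟩ := hM.recv_matched f.val hf
    exact ⟨⟨e, hS.mem_of_msg he f.2⟩, he, fun e' he' => Subtype.ext (huniq e'.val he')⟩
  msg_functional e f f' h h' := Subtype.ext (hM.msg_functional e.val f.val f'.val h h')
  hb_po e he := hM.hb_po e.val (he.lift (p := M.step) Subtype.val fun _ _ h => h)

theorem IsLin.restrict {lin : M.E → M.E → Prop} (h : M.IsLin lin) (S : Set M.E) :
    (M.restrict S).IsLin (fun a b => lin a.val b.val) where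
  refl e := h.refl e.val
  trans e f g := h.trans e.val f.val g.val
  antisymm e f hef hfe := Subtype.ext (h.antisymm e.val f.val hef hfe)
  total e f := h.total e.val f.val
  hb_le e f hef := h.hb_le e.val f.val (hef.lift (p := M.step) Subtype.val fun _ _ h => h)

theorem OneNCond.restrict (hM : M.IsMSC) (hS : M.OneNDownClosed S) {lin : M.E → M.E → Prop}
    (h : M.OneNCond lin) : (M.restrict S).OneNCond (fun a b => lin a.val b.val) := by
  intro s s' hs hs' hexec hss'
  have hss'M : TransGen M.next s.val s'.val := hss'.lift Subtype.val fun _ _ h => h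
  rcases h s.val s'.val hs hs' hexec hss'M with ⟨r, r', hr, hr', hrr'⟩ | hunm
  · by_cases hr'S : r' ∈ S
    · have hrr'1n : M.onenRel r r' := .inr ⟨s.val, s'.val, hr, hr', hexec, hss'M⟩
      have hrS : r ∈ S := hS r r' (.single (.inr (.inr hrr'1n))) hr'S
      exact .inl ⟨⟨r, hrS⟩, ⟨r', hr'S⟩, hr, hr', hrr'⟩
    · exact .inr fun ⟨f, hf⟩ => hr'S (hM.msg_functional _ _ _ hf hr' ▸ f.2)
  · exact .inr fun ⟨f, hf⟩ => hunm ⟨f.val, hf⟩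

end MSCPaper.PreMSC

namespace MSCPaper

/-- Every 1-n-prefix (restriction to a `⪯_1n`-downward-closed set
of events) of a 1-n MSC is a 1-n MSC. -/
theorem oneN_prefix_isOneN {P Msg : Type} (M : PreMSC P Msg) (hM : M.IsMSC)
    (h : M.IsOneN) (S : Set M.E) (hS : M.OneNDownClosed S) :
    (M.restrict S).IsMSC ∧ (M.restrict S).IsOneN := by
  obtain ⟨lin, hlin, hcond⟩ := h
  exact ⟨hM.restrict hS.downClosed, _, hlin.restrict S, hcond.restrict hM hS⟩

end MSCPaper
end
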